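/- arXiv:2605.15890 — 3 statements merged into one kernel-verified Lean document; each statement's English description precedes it below -/
import Mathlib

section
/- For the stochastic quantizer Q with s magnitude levels on vectors in ℝ^l, the quantization error variance satisfies E[‖Q(x) − x‖₂² | x] ≤ (l/(4s²)) · ‖x‖₂². -/
open MeasureTheory

lemma two_point_repr {Ω : Type*} (ξ : Ω → ℝ) (hi lo : ℝ) (hne : hi ≠ lo)
    (hval : ∀ ω, ξ ω = hi ∨ ξ ω = lo) (g : ℝ → ℝ) :
    (fun ω => g (ξ ω)) =
      (fun ω => Set.indicator {ω | ξ ω = hi} (fun _ => g hi) ω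
        + Set.indicator {ω | ξ ω = hi}ᶜ (fun _ => g lo) ω) := by
  funext ω
  rcases hval ω with h | h <;>
    simp [Set.indicator_apply, Set.mem_setOf_eq, h, hne, Ne.symm hne]

lemma two_point_integral {Ω : Type*} [MeasurableSpace Ω] (μ : Measure Ω)
    [IsProbabilityMeasure μ] (ξ : Ω → ℝ) (hm : Measurable ξ) (hi lo p : ℝ)
    (hne : hi ≠ lo) (hp0 : 0 ≤ p) (hp1 : p ≤ 1)
    (hval : ∀ ω, ξ ω = hi ∨ ξ ω = lo)
    (hprob : μ {ω | ξ ω = hi} = ENNReal.ofReal p) (g : ℝ → ℝ) :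
    Integrable (fun ω => g (ξ ω)) μ ∧
    ∫ ω, g (ξ ω) ∂μ = p * g hi + (1 - p) * g lo := by
  have hA : MeasurableSet {ω | ξ ω = hi} := hm (measurableSet_singleton hi)
  have hrepr := two_point_repr ξ hi lo hne hval g
  have hint1 : Integrable (Set.indicator {ω | ξ ω = hi} (fun _ => g hi)) μ :=
    (integrable_const _).indicator hA
  have hint2 : Integrable (Set.indicator {ω | ξ ω = hi}ᶜ (fun _ => g lo)) μ :=
    (integrable_const _).indicator hA.compl
  constructor
  · rw [hrepr]; exact hint1.add hint2
  · rw [hrepr, integral_add hint1 hint2, integral_indicator_const _ hA,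
      integral_indicator_const _ hA.compl, measureReal_def, measureReal_def, measure_compl hA (measure_ne_top μ _), hprob,
      measure_univ]
    have hle : ENNReal.ofReal p ≤ 1 := by
      simpa using ENNReal.ofReal_le_ofReal hp1
    rw [ENNReal.toReal_sub_of_le hle (by simp)]
    simp only [ENNReal.toReal_ofReal hp0, ENNReal.toReal_one, smul_eq_mul]

/-- The stochastic quantizer with `s` magnitude levels has
quantization error variance bounded by `(l/(4 s²)) ‖x‖²`:
`E[‖Q(x) − x‖₂² | x] ≤ (l/(4 s²)) ‖x‖₂²`. -/
theorem quantizer_variance_bound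
    {l : ℕ} (x : EuclideanSpace ℝ (Fin l)) (hx : x ≠ 0)
    (s : ℕ) (hs : 1 ≤ s)
    {Ω : Type*} [MeasurableSpace Ω] (μ : Measure Ω) [IsProbabilityMeasure μ]
    (ξ : Fin l → Ω → ℝ) (hmeas : ∀ m, Measurable (ξ m))
    (hval : ∀ m, ∀ ω,
      ξ m ω = ((⌊(s : ℝ) * (|x m| / ‖x‖)⌋ : ℝ) + 1) / s ∨
      ξ m ω = (⌊(s : ℝ) * (|x m| / ‖x‖)⌋ : ℝ) / s)
    (hprob : ∀ m,
      μ {ω | ξ m ω = ((⌊(s : ℝ) * (|x m| / ‖x‖)⌋ : ℝ) + 1) / s} =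
        ENNReal.ofReal ((s : ℝ) * (|x m| / ‖x‖) - (⌊(s : ℝ) * (|x m| / ‖x‖)⌋ : ℝ))) :
    ∫ ω, ∑ m, (‖x‖ * Real.sign (x m) * ξ m ω - x m) ^ 2 ∂μ ≤
      ((l : ℝ) / (4 * (s : ℝ) ^ 2)) * ‖x‖ ^ 2 := by
  have hxnorm : (0:ℝ) < ‖x‖ := norm_pos_iff.mpr hx
  have hs0 : (0:ℝ) < (s:ℝ) := by exact_mod_cast hs
  have key : ∀ m : Fin l,
      Integrable (fun ω => (‖x‖ * Real.sign (x m) * ξ m ω - x m)^2) μ ∧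
      ∫ ω, (‖x‖ * Real.sign (x m) * ξ m ω - x m)^2 ∂μ ≤ ‖x‖^2 / (4 * (s:ℝ)^2) := by
    intro m
    set u : ℝ := |x m| / ‖x‖ with hu
    set a : ℝ := (⌊(s:ℝ) * u⌋ : ℝ) with ha
    set p : ℝ := (s:ℝ) * u - a with hp
    have hfr : p = Int.fract ((s:ℝ) * u) := by rw [hp, ha, Int.fract]
    have hp0 : 0 ≤ p := hfr ▸ Int.fract_nonneg _
    have hp1 : p ≤ 1 := le_of_lt (hfr ▸ Int.fract_lt_one _)
    have hne : (a+1)/(s:ℝ) ≠ a/(s:ℝ) := by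
      intro h
      rw [div_eq_div_iff hs0.ne' hs0.ne'] at h
      nlinarith
    obtain ⟨hint, heq⟩ := two_point_integral μ (ξ m) (hmeas m) ((a+1)/(s:ℝ)) (a/(s:ℝ)) p hne
      hp0 hp1 (hval m) (hprob m)
      (fun t => (‖x‖ * Real.sign (x m) * t - x m)^2)
    refine ⟨hint, ?_⟩
    rw [heq]
    set c : ℝ := Real.sign (x m) with hc
    have hxm : x m = c * (‖x‖ * u) := by
      rw [hc, hu]
      rcases lt_trichotomy (x m) 0 with h | h | h
      · rw [Real.sign_of_neg h, abs_of_neg h]; field_simp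
      · simp [h]
      · rw [Real.sign_of_pos h, abs_of_pos h]; field_simp
    have hc2 : c^2 ≤ 1 := by
      rw [hc]
      rcases lt_trichotomy (x m) 0 with h | h | h
      · rw [Real.sign_of_neg h]; norm_num
      · rw [h, Real.sign_zero]; norm_num
      · rw [Real.sign_of_pos h]; norm_num
    have e1 : ‖x‖ * c * ((a+1)/(s:ℝ)) - x m = c * ‖x‖ * (1-p) / (s:ℝ) := by
      rw [hxm, hp]; field_simp; ring
    have e2 : ‖x‖ * c * (a/(s:ℝ)) - x m = -(c * ‖x‖ * p / (s:ℝ)) := by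
      rw [hxm, hp]; field_simp; ring
    simp only [e1, e2]
    have hq0 : 0 ≤ p * (1-p) := mul_nonneg hp0 (by linarith)
    have hq : p * (1-p) ≤ 1/4 := by nlinarith [sq_nonneg (2*p-1)]
    have hc0 : 0 ≤ c^2 := sq_nonneg c
    have hstep : p * (c * ‖x‖ * (1-p) / (s:ℝ))^2 + (1-p) * (-(c * ‖x‖ * p / (s:ℝ)))^2
        = c^2 * ‖x‖^2 * (p * (1-p)) / (s:ℝ)^2 := by
      field_simp
      ring
    rw [hstep, div_le_div_iff₀ (by positivity) (by positivity)]
    have h1 : c^2 * (p * (1-p)) ≤ 1/4 := by nlinarith [mul_le_mul_of_nonneg_right hq hc0]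
    calc c^2 * ‖x‖^2 * (p * (1-p)) * (4 * (s:ℝ)^2)
        = (c^2 * (p * (1-p))) * (4 * ‖x‖^2 * (s:ℝ)^2) := by ring
      _ ≤ (1/4) * (4 * ‖x‖^2 * (s:ℝ)^2) :=
          mul_le_mul_of_nonneg_right h1 (by positivity)
      _ = ‖x‖^2 * (s:ℝ)^2 := by ring
  rw [integral_finset_sum _ (fun m _ => (key m).1)]
  calc ∑ m, ∫ ω, (‖x‖ * Real.sign (x m) * ξ m ω - x m)^2 ∂μ
      ≤ ∑ _m : Fin l, ‖x‖^2 / (4 * (s:ℝ)^2) := Finset.sum_le_sum fun m _ => (key m).2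
    _ = (l : ℝ) * (‖x‖^2 / (4 * (s:ℝ)^2)) := by
        rw [Finset.sum_const, Finset.card_univ, Fintype.card_fin, nsmul_eq_mul]
    _ = ((l : ℝ) / (4 * (s:ℝ)^2)) * ‖x‖^2 := by ring
end

section
/- Under the unbiasedness constraint Σ_{i=1}^k (1−p_i) w_i a_{i,j} = 1 for all j ∈ [1:n], and with straggler indicators and quantizers as given, the total residual error satisfies E[‖g − ĝ‖₂²] ≤ C Σ_{i=1}^k (1−p_i)(p_i + φ(z_i)) w_i² (Σ_{j=1}^n a_{i,j})², decomposing as the sum of straggler error C Σ_i p_i(1−p_i) w_i² (Σ_j a_{i,j})² and quantization error C Σ_i (1−p_i) φ(z_i) w_i² (Σ_j a_{i,j})². -/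
open MeasureTheory ProbabilityTheory

lemma var_sum_aux {Ω : Type*} [MeasurableSpace Ω] (μ : Measure Ω) [IsProbabilityMeasure μ]
    {k : ℕ} (Y : Fin k → Ω → ℝ)
    (hint : ∀ i, Integrable (Y i) μ)
    (hint2 : ∀ i, Integrable (fun ω => (Y i ω)^2) μ)
    (hprod : ∀ i i', i ≠ i' → Integrable (fun ω => Y i ω * Y i' ω) μ)
    (hmul : ∀ i i', i ≠ i' →
      ∫ ω, Y i ω * Y i' ω ∂μ = (∫ ω, Y i ω ∂μ) * ∫ ω, Y i' ω ∂μ)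
    (G : ℝ) (hG : ∑ i, ∫ ω, Y i ω ∂μ = G) :
    ∫ ω, (G - ∑ i, Y i ω)^2 ∂μ
      = ∑ i, ((∫ ω, (Y i ω)^2 ∂μ) - (∫ ω, Y i ω ∂μ)^2) := by
  have hprod' : ∀ i i', Integrable (fun ω => Y i ω * Y i' ω) μ := by
    intro i i'
    rcases eq_or_ne i i' with rfl | h
    · simpa [pow_two] using hint2 i
    · exact hprod i i' h
  have hS : Integrable (fun ω => ∑ i, Y i ω) μ := integrable_finset_sum _ fun i _ => hint i
  have hpt : ∀ ω, (G - ∑ i, Y i ω)^2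
      = G^2 - 2 * G * (∑ i, Y i ω) + ∑ i, ∑ i', Y i ω * Y i' ω := by
    intro ω
    rw [← Finset.sum_mul_sum]
    ring
  have key : ∀ i : Fin k, ∑ i', ∫ ω, Y i ω * Y i' ω ∂μ
      = ((∫ ω, (Y i ω)^2 ∂μ) - (∫ ω, Y i ω ∂μ)^2) + (∫ ω, Y i ω ∂μ) * G := by
    intro i
    have hdiff : ∑ i', ((∫ ω, Y i ω * Y i' ω ∂μ) - (∫ ω, Y i ω ∂μ) * ∫ ω, Y i' ω ∂μ)
        = (∫ ω, (Y i ω)^2 ∂μ) - (∫ ω, Y i ω ∂μ)^2 := by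
      rw [Finset.sum_eq_single_of_mem i (Finset.mem_univ i)]
      · simp [pow_two]
      · intro i' _ h
        rw [hmul i i' (Ne.symm h)]
        ring
    calc ∑ i', ∫ ω, Y i ω * Y i' ω ∂μ
        = (∑ i', ((∫ ω, Y i ω * Y i' ω ∂μ) - (∫ ω, Y i ω ∂μ) * ∫ ω, Y i' ω ∂μ))
          + (∫ ω, Y i ω ∂μ) * ∑ i', ∫ ω, Y i' ω ∂μ := by
          rw [Finset.mul_sum, ← Finset.sum_add_distrib]
          exact Finset.sum_congr rfl fun i' _ => by ring
      _ = _ := by rw [hdiff, hG]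
  calc ∫ ω, (G - ∑ i, Y i ω)^2 ∂μ
      = ∫ ω, (G^2 - 2 * G * (∑ i, Y i ω) + ∑ i, ∑ i', Y i ω * Y i' ω) ∂μ := by
        simp_rw [hpt]
    _ = G^2 - 2 * G * (∑ i, ∫ ω, Y i ω ∂μ) + ∑ i, ∑ i', ∫ ω, Y i ω * Y i' ω ∂μ := by
        have h1 : Integrable (fun ω => G^2 - 2*G*(∑ i, Y i ω)) μ :=
          (integrable_const _).sub (hS.const_mul _)
        have h2 : Integrable (fun ω => ∑ i, ∑ i', Y i ω * Y i' ω) μ :=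
          integrable_finset_sum _ fun i _ => integrable_finset_sum _ fun i' _ => hprod' i i'
        rw [integral_add h1 h2, integral_sub (integrable_const _) (hS.const_mul _),
          integral_const, integral_const_mul, integral_finset_sum _ (fun i _ => hint i)]
        congr 1
        · simp
        · rw [integral_finset_sum _ (fun i _ => integrable_finset_sum _ fun i' _ => hprod' i i')]
          exact Finset.sum_congr rfl fun i _ => integral_finset_sum _ fun i' _ => hprod' i i'
    _ = ∑ i, ((∫ ω, (Y i ω)^2 ∂μ) - (∫ ω, Y i ω ∂μ)^2) := by
        rw [hG]
        simp_rw [key]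
        rw [Finset.sum_add_distrib, ← Finset.sum_mul, hG]
        ring


/-- Lemma 1: Under the unbiasedness constraint
`Σ_i (1−p_i) w_i a_{i,j} = 1` for all `j`, with independent `{0,1}`-valued
straggler indicators `I i` of mean `1 − p i` and independent unbiased
quantizers `q i` of the coded messages `f i = Σ_j a_{i,j} g_j` with variance
factors `φ i`, the total residual error of `ĝ = Σ_i I_i w_i q_i` satisfies
`E[‖g − ĝ‖²] ≤ C Σ_i (1−p_i)(p_i + φ_i) w_i² (Σ_j a_{i,j})²`, and this bound
decomposes as the sum of the straggler error term
`C Σ_i p_i (1−p_i) w_i² (Σ_j a_{i,j})²` and the quantization error term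
`C Σ_i (1−p_i) φ_i w_i² (Σ_j a_{i,j})²`. -/
theorem residual_error_bound
    {k n l : ℕ}
    (C : ℝ) (hC : 0 < C)
    (p : Fin k → ℝ) (hp : ∀ i, p i ∈ Set.Icc (0 : ℝ) 1)
    (φ : Fin k → ℝ) (hφ : ∀ i, 0 ≤ φ i)
    (g : Fin n → EuclideanSpace ℝ (Fin l)) (hg : ∀ j, ‖g j‖ ^ 2 ≤ C)
    (a : Fin k → Fin n → ℝ) (ha : ∀ i j, 0 ≤ a i j)
    (w : Fin k → ℝ)
    (hunbiased : ∀ j, ∑ i, (1 - p i) * w i * a i j = 1)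
    {Ω : Type*} [MeasurableSpace Ω] (μ : Measure Ω) [IsProbabilityMeasure μ]
    (I : Fin k → Ω → ℝ) (hImeas : ∀ i, Measurable (I i))
    (hIval : ∀ i, ∀ ω, I i ω = 0 ∨ I i ω = 1)
    (hImean : ∀ i, ∫ ω, I i ω ∂μ = 1 - p i)
    (q : Fin k → Ω → EuclideanSpace ℝ (Fin l))
    (hqmeas : ∀ i, Measurable (q i))
    (hqint : ∀ i, Integrable (q i) μ)
    (hqint2 : ∀ i, Integrable (fun ω => ‖q i ω‖ ^ 2) μ)
    (hqunbiased : ∀ i, ∫ ω, q i ω ∂μ = ∑ j, a i j • g j)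
    (hqvar : ∀ i, ∫ ω, ‖q i ω - ∑ j, a i j • g j‖ ^ 2 ∂μ ≤
      φ i * ‖∑ j, a i j • g j‖ ^ 2)
    (hindep : iIndepFun (fun i ω => (I i ω, q i ω)) μ)
    (hindep2 : ∀ i, IndepFun (I i) (q i) μ) :
    (∫ ω, ‖(∑ j, g j) - ∑ i, I i ω • (w i • q i ω)‖ ^ 2 ∂μ ≤
      C * ∑ i, (1 - p i) * (p i + φ i) * w i ^ 2 * (∑ j, a i j) ^ 2) ∧
    C * ∑ i, (1 - p i) * (p i + φ i) * w i ^ 2 * (∑ j, a i j) ^ 2 =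
      C * (∑ i, p i * (1 - p i) * w i ^ 2 * (∑ j, a i j) ^ 2) +
      C * (∑ i, (1 - p i) * φ i * w i ^ 2 * (∑ j, a i j) ^ 2) := by
  constructor
  · -- main inequality
    set f : Fin k → EuclideanSpace ℝ (Fin l) := fun i => ∑ j, a i j • g j with hf
    set Y : Fin k → Fin l → Ω → ℝ := fun i m ω => I i ω * (w i * q i ω m) with hY
    set G : Fin l → ℝ := fun m => (∑ j, g j) m with hGdef
    -- basic coordinate facts
    have coordSq : ∀ x : EuclideanSpace ℝ (Fin l), ‖x‖^2 = ∑ m, (x m)^2 := by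
      intro x
      rw [EuclideanSpace.norm_eq, Real.sq_sqrt (by positivity)]
      simp [sq_abs]
    have coord_le : ∀ (x : EuclideanSpace ℝ (Fin l)) m, (x m)^2 ≤ ‖x‖^2 := by
      intro x m
      rw [coordSq]
      exact Finset.single_le_sum (f := fun j => (x j)^2) (fun j _ => sq_nonneg _)
        (Finset.mem_univ m)
    have fm : ∀ i m, f i m = ∑ j, a i j * g j m := by
      intro i m
      simp only [hf]
      rw [WithLp.ofLp_sum, Finset.sum_apply]
      rfl
    -- coordinate integrability and means
    have qm_meas : ∀ i m, Measurable (fun ω => q i ω m) := fun i m =>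
      ((EuclideanSpace.proj (𝕜 := ℝ) m).continuous.measurable).comp (hqmeas i)
    have qm_int : ∀ i m, Integrable (fun ω => q i ω m) μ := by
      intro i m
      simpa using (EuclideanSpace.proj (𝕜 := ℝ) m).integrable_comp (hqint i)
    have qm2_int : ∀ i m, Integrable (fun ω => (q i ω m)^2) μ := by
      intro i m
      refine (hqint2 i).mono' (((qm_meas i m).pow_const 2).aestronglyMeasurable) ?_
      filter_upwards with ω
      rw [Real.norm_eq_abs, abs_of_nonneg (sq_nonneg _)]
      exact coord_le _ _
    have qm_mean : ∀ i m, ∫ ω, q i ω m ∂μ = f i m := by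
      intro i m
      have h := (EuclideanSpace.proj (𝕜 := ℝ) m).integral_comp_comm (hqint i)
      rw [fm]
      simpa [hqunbiased i] using h
    have I_bdd : ∀ i ω, ‖I i ω‖ ≤ 1 := by
      intro i ω
      rcases hIval i ω with h | h <;> simp [h]
    have I_int : ∀ i, Integrable (I i) μ := fun i =>
      (integrable_const (1:ℝ)).mono' (hImeas i).aestronglyMeasurable
        (Filter.Eventually.of_forall (I_bdd i))
    have I_sq : ∀ i ω, I i ω * I i ω = I i ω := by
      intro i ω
      rcases hIval i ω with h | h <;> simp [h]
    have Y_int : ∀ i m, Integrable (Y i m) μ := by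
      intro i m
      exact ((qm_int i m).const_mul (w i)).bdd_mul (hImeas i).aestronglyMeasurable (Filter.Eventually.of_forall (I_bdd i))
    have Y2_int : ∀ i m, Integrable (fun ω => (Y i m ω)^2) μ := by
      intro i m
      have h1 : Integrable (fun ω => I i ω * ((w i)^2 * (q i ω m)^2)) μ :=
        ((qm2_int i m).const_mul ((w i)^2)).bdd_mul (hImeas i).aestronglyMeasurable (Filter.Eventually.of_forall (I_bdd i))
      refine h1.congr (Filter.Eventually.of_forall fun ω => ?_)
      rcases hIval i ω with h | h <;> simp only [hY, h] <;> ring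
    -- means of Y and Y^2 via independence
    have Y_mean : ∀ i m, ∫ ω, Y i m ω ∂μ = (1 - p i) * (w i * f i m) := by
      intro i m
      have hi : IndepFun (I i) (fun ω => w i * q i ω m) μ :=
        (hindep2 i).comp measurable_id
          (measurable_const.mul ((EuclideanSpace.proj (𝕜 := ℝ) m).continuous.measurable))
      have hIM := hi.integral_fun_mul_eq_mul_integral (hImeas i).aestronglyMeasurable
        ((measurable_const.mul (qm_meas i m)).aestronglyMeasurable)
      simp only [hY]
      calc ∫ ω, I i ω * (w i * q i ω m) ∂μ
          = (∫ ω, I i ω ∂μ) * ∫ ω, w i * q i ω m ∂μ := hIM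
        _ = (1 - p i) * (w i * f i m) := by
            rw [hImean i, integral_const_mul, qm_mean i m]
    have Y2_mean : ∀ i m, ∫ ω, (Y i m ω)^2 ∂μ = (1 - p i) * ((w i)^2 * ∫ ω, (q i ω m)^2 ∂μ) := by
      intro i m
      have hi : IndepFun (I i) (fun ω => (w i)^2 * (q i ω m)^2) μ :=
        (hindep2 i).comp measurable_id
          (measurable_const.mul
            (((EuclideanSpace.proj (𝕜 := ℝ) m).continuous.measurable).pow_const 2))
      have hIM := hi.integral_fun_mul_eq_mul_integral (hImeas i).aestronglyMeasurable
        ((measurable_const.mul ((qm_meas i m).pow_const 2)).aestronglyMeasurable)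
      have hpt : ∀ ω, (Y i m ω)^2 = I i ω * ((w i)^2 * (q i ω m)^2) := by
        intro ω
        rcases hIval i ω with h | h <;> simp only [hY, h] <;> ring
      calc ∫ ω, (Y i m ω)^2 ∂μ = ∫ ω, I i ω * ((w i)^2 * (q i ω m)^2) ∂μ := by simp_rw [hpt]
        _ = (∫ ω, I i ω ∂μ) * ∫ ω, (w i)^2 * (q i ω m)^2 ∂μ := hIM
        _ = (1 - p i) * ((w i)^2 * ∫ ω, (q i ω m)^2 ∂μ) := by
            rw [hImean i, integral_const_mul]
    -- pairwise independence of the Y's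
    have Y_indep : ∀ (m : Fin l) i i', i ≠ i' → IndepFun (Y i m) (Y i' m) μ := by
      intro m i i' hne
      have hpair := hindep.indepFun hne
      have hm : ∀ c : ℝ, Measurable (fun x : ℝ × EuclideanSpace ℝ (Fin l) => x.1 * (c * x.2 m)) :=
        fun c => measurable_fst.mul (measurable_const.mul
          (((EuclideanSpace.proj (𝕜 := ℝ) m).continuous.measurable).comp measurable_snd))
      exact hpair.comp (hm (w i)) (hm (w i'))
    have Y_prod_int : ∀ (m : Fin l) i i', i ≠ i' →
        Integrable (fun ω => Y i m ω * Y i' m ω) μ := by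
      intro m i i' hne
      have := (Y_indep m i i' hne).integrable_mul (Y_int i m) (Y_int i' m)
      exact this
    have Y_prod_mean : ∀ (m : Fin l) i i', i ≠ i' →
        ∫ ω, Y i m ω * Y i' m ω ∂μ = (∫ ω, Y i m ω ∂μ) * ∫ ω, Y i' m ω ∂μ := by
      intro m i i' hne
      have := (Y_indep m i i' hne).integral_fun_mul_eq_mul_integral (Y_int i m).aestronglyMeasurable
        (Y_int i' m).aestronglyMeasurable
      simpa [Pi.mul_apply] using this
    -- the unbiasedness in coordinates
    have hGm : ∀ m, ∑ i, ∫ ω, Y i m ω ∂μ = G m := by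
      intro m
      simp_rw [Y_mean, fm]
      calc ∑ i, (1 - p i) * (w i * ∑ j, a i j * g j m)
          = ∑ i, ∑ j, (1 - p i) * w i * a i j * g j m := by
            refine Finset.sum_congr rfl fun i _ => ?_
            rw [Finset.mul_sum, Finset.mul_sum]
            exact Finset.sum_congr rfl fun j _ => by ring
        _ = ∑ j, (∑ i, (1 - p i) * w i * a i j) * g j m := by
            rw [Finset.sum_comm]
            exact Finset.sum_congr rfl fun j _ => (Finset.sum_mul _ _ _).symm
        _ = ∑ j, g j m := by simp [hunbiased]
        _ = G m := by simp [hGdef]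
    -- integrability of coordinate squares
    have hC_int : ∀ m, Integrable (fun ω => (G m - ∑ i, Y i m ω)^2) μ := by
      intro m
      have hprod' : ∀ i i', Integrable (fun ω => Y i m ω * Y i' m ω) μ := by
        intro i i'
        rcases eq_or_ne i i' with rfl | h
        · simpa [pow_two] using Y2_int i m
        · exact Y_prod_int m i i' h
      have hS : Integrable (fun ω => ∑ i, Y i m ω) μ :=
        integrable_finset_sum _ fun i _ => Y_int i m
      have h1 : Integrable (fun ω => (G m)^2 - 2*(G m)*(∑ i, Y i m ω)
          + ∑ i, ∑ i', Y i m ω * Y i' m ω) μ :=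
        ((integrable_const _).sub (hS.const_mul _)).add
          (integrable_finset_sum _ fun i _ => integrable_finset_sum _ fun i' _ => hprod' i i')
      refine h1.congr (Filter.Eventually.of_forall fun ω => ?_)
      dsimp only
      rw [← Finset.sum_mul_sum]
      ring
    -- variance of quantizer coordinates
    have hQbound : ∀ i, ∫ ω, ‖q i ω‖^2 ∂μ ≤ (1 + φ i) * ‖f i‖^2 := by
      intro i
      have hdm : ∀ m, Integrable (fun ω => (q i ω m - f i m)^2) μ := by
        intro m
        have heq : (fun ω => (q i ω m - f i m)^2)
            = fun ω => ((q i ω m)^2 - 2 * f i m * q i ω m) + (f i m)^2 :=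
          funext fun ω => by ring
        rw [heq]
        exact ((qm2_int i m).sub ((qm_int i m).const_mul _)).add (integrable_const _)
      have hvar_eq : ∫ ω, ‖q i ω - f i‖^2 ∂μ
          = (∫ ω, ‖q i ω‖^2 ∂μ) - ‖f i‖^2 := by
        calc ∫ ω, ‖q i ω - f i‖^2 ∂μ
            = ∫ ω, ∑ m, (q i ω m - f i m)^2 ∂μ := by
              refine integral_congr_ae (Filter.Eventually.of_forall fun ω => ?_)
              dsimp only
              rw [coordSq]
              rfl
          _ = ∑ m, ∫ ω, (q i ω m - f i m)^2 ∂μ := integral_finset_sum _ fun m _ => hdm m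
          _ = ∑ m, ((∫ ω, (q i ω m)^2 ∂μ) - (f i m)^2) := by
              refine Finset.sum_congr rfl fun m _ => ?_
              have heq : (fun ω => (q i ω m - f i m)^2)
                  = fun ω => ((q i ω m)^2 - 2 * f i m * q i ω m) + (f i m)^2 :=
                funext fun ω => by ring
              have hi1 : Integrable (fun ω => q i ω m ^ 2 - 2 * f i m * q i ω m) μ :=
                (qm2_int i m).sub ((qm_int i m).const_mul _)
              rw [heq, integral_add hi1 (integrable_const _),
                integral_sub (qm2_int i m) ((qm_int i m).const_mul _),
                integral_const_mul, qm_mean i m, integral_const]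
              simp
              ring
          _ = (∫ ω, ‖q i ω‖^2 ∂μ) - ‖f i‖^2 := by
              rw [Finset.sum_sub_distrib, ← integral_finset_sum _ (fun m _ => qm2_int i m),
                coordSq (f i)]
              congr 1
              refine integral_congr_ae (Filter.Eventually.of_forall fun ω => ?_)
              dsimp only
              rw [coordSq]
      have := hqvar i
      rw [hvar_eq] at this
      linarith
    -- bound on the coded message norm
    have hFbound : ∀ i, ‖f i‖^2 ≤ C * (∑ j, a i j)^2 := by
      intro i
      have hfn : ‖f i‖ ≤ Real.sqrt C * ∑ j, a i j := by
        calc ‖f i‖ ≤ ∑ j, ‖a i j • g j‖ := norm_sum_le _ _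
          _ = ∑ j, a i j * ‖g j‖ := by
              refine Finset.sum_congr rfl fun j _ => ?_
              rw [norm_smul, Real.norm_eq_abs, abs_of_nonneg (ha i j)]
          _ ≤ ∑ j, a i j * Real.sqrt C := by
              refine Finset.sum_le_sum fun j _ => ?_
              exact mul_le_mul_of_nonneg_left (Real.le_sqrt_of_sq_le (hg j)) (ha i j)
          _ = Real.sqrt C * ∑ j, a i j := by
              rw [Finset.mul_sum]
              exact Finset.sum_congr rfl fun j _ => mul_comm _ _
      calc ‖f i‖^2 ≤ (Real.sqrt C * ∑ j, a i j)^2 :=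
            pow_le_pow_left₀ (norm_nonneg _) hfn 2
        _ = C * (∑ j, a i j)^2 := by rw [mul_pow, Real.sq_sqrt hC.le]
    -- the main chain
    calc ∫ ω, ‖(∑ j, g j) - ∑ i, I i ω • (w i • q i ω)‖^2 ∂μ
        = ∫ ω, ∑ m, (G m - ∑ i, Y i m ω)^2 ∂μ := by
          refine integral_congr_ae (Filter.Eventually.of_forall fun ω => ?_)
          dsimp only
          rw [coordSq]
          refine Finset.sum_congr rfl fun m _ => ?_
          congr 1
          show ((∑ j, g j) m) - ((∑ i, I i ω • (w i • q i ω)) m) = G m - ∑ i, Y i m ω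
          exact congrArg₂ (· - ·) rfl (by rw [WithLp.ofLp_sum, Finset.sum_apply]; rfl)
      _ = ∑ m, ∫ ω, (G m - ∑ i, Y i m ω)^2 ∂μ := integral_finset_sum _ fun m _ => hC_int m
      _ = ∑ m, ∑ i, ((∫ ω, (Y i m ω)^2 ∂μ) - (∫ ω, Y i m ω ∂μ)^2) := by
          refine Finset.sum_congr rfl fun m _ => ?_
          exact var_sum_aux μ (fun i => Y i m) (fun i => Y_int i m) (fun i => Y2_int i m)
            (fun i i' h => Y_prod_int m i i' h) (fun i i' h => Y_prod_mean m i i' h)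
            (G m) (hGm m)
      _ = ∑ i, ((1 - p i) * ((w i)^2 * ∫ ω, ‖q i ω‖^2 ∂μ)
            - (1 - p i)^2 * ((w i)^2 * ‖f i‖^2)) := by
          rw [Finset.sum_comm]
          refine Finset.sum_congr rfl fun i _ => ?_
          rw [Finset.sum_sub_distrib]
          congr 1
          · simp_rw [Y2_mean]
            rw [← Finset.mul_sum, ← Finset.mul_sum,
              ← integral_finset_sum _ (fun m _ => qm2_int i m)]
            congr 2
            refine integral_congr_ae (Filter.Eventually.of_forall fun ω => ?_)
            dsimp only
            exact (coordSq (q i ω)).symm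
          · simp_rw [Y_mean]
            rw [coordSq (f i), Finset.mul_sum, Finset.mul_sum]
            exact Finset.sum_congr rfl fun m _ => by ring
      _ ≤ ∑ i, (1 - p i) * (p i + φ i) * w i ^ 2 * (C * (∑ j, a i j)^2) := by
          refine Finset.sum_le_sum fun i _ => ?_
          have hp1 := (hp i).1
          have hp2 := (hp i).2
          have h1 : 0 ≤ (1 - p i) * (w i)^2 := mul_nonneg (by linarith) (sq_nonneg _)
          have h2 : 0 ≤ (1 - p i) * (p i + φ i) * (w i)^2 :=
            mul_nonneg (mul_nonneg (by linarith) (by linarith [hφ i])) (sq_nonneg _)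
          have hA := mul_le_mul_of_nonneg_left (hQbound i) h1
          have hB := mul_le_mul_of_nonneg_left (hFbound i) h2
          nlinarith [sq_nonneg (w i), norm_nonneg (f i), sq_nonneg ‖f i‖]
      _ = C * ∑ i, (1 - p i) * (p i + φ i) * w i ^ 2 * (∑ j, a i j) ^ 2 := by
          rw [Finset.mul_sum]
          exact Finset.sum_congr rfl fun i _ => by ring
  · -- algebraic decomposition
    rw [← mul_add, ← Finset.sum_add_distrib]
    congr 1
    exact Finset.sum_congr rfl fun i _ => by ring
end

section
/- With decaying learning rates γ_t = 1/√(t+1), if γ_t·E[‖g^{(t)}‖₂²] ≤ E[L(β_t)] − E[L(β_{t+1})] + K·γ_t² for all t, with L(β_{T+1}) ≥ L(β*) and K ≥ 0, then (1/(T+1)) Σ_{t=0}^T E[‖g^{(t)}‖₂²] ≤ (L(β_0) − L(β*))/√(T+1) + 2K(1 + log√(T+1))/√(T+1), and hence the left-hand side tends to 0 as T → ∞. -/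
open Filter

lemma sum_inv_le_one_add_log (T : ℕ) :
    ∑ t ∈ Finset.range (T + 1), (1 : ℝ) / ((t : ℝ) + 1) ≤
      1 + Real.log ((T : ℝ) + 1) := by
  have h := harmonic_le_one_add_log (T + 1)
  have hh : ((harmonic (T + 1) : ℚ) : ℝ) =
      ∑ t ∈ Finset.range (T + 1), (1 : ℝ) / ((t : ℝ) + 1) := by
    simp [harmonic, one_div]
  rw [hh] at h
  convert h using 3
  push_cast
  ring

/-- Telescoping convergence bound for decaying learning rates
`γ_t = 1/√(t+1)`. If `γ_t E[‖g⁽ᵗ⁾‖²] ≤ E[L(β_t)] − E[L(β_{t+1})] + K γ_t²`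
for all `t`, with `K ≥ 0`, `E[‖g⁽ᵗ⁾‖²] ≥ 0` and `L(β_t) ≥ L(β⋆)`, then for
every `T`,
`(1/(T+1)) Σ_{t=0}^T E[‖g⁽ᵗ⁾‖²] ≤ (L(β₀) − L(β⋆))/√(T+1)
  + 2K(1 + log √(T+1))/√(T+1)`,
and hence the averaged expected squared gradient norm tends to `0`. -/
theorem smooth_convergence_decaying_rate
    (K : ℝ) (hK : 0 ≤ K)
    (EL : ℕ → ℝ) (Eg : ℕ → ℝ) (Lstar : ℝ)
    (hEg : ∀ t, 0 ≤ Eg t)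
    (hstep : ∀ t : ℕ,
      (1 / Real.sqrt (t + 1)) * Eg t ≤
        EL t - EL (t + 1) + K * (1 / Real.sqrt (t + 1)) ^ 2)
    (hLstar : ∀ t, Lstar ≤ EL t) :
    (∀ T : ℕ,
      (1 / ((T : ℝ) + 1)) * ∑ t ∈ Finset.range (T + 1), Eg t ≤
        (EL 0 - Lstar) / Real.sqrt (T + 1) +
          2 * K * (1 + Real.log (Real.sqrt (T + 1))) / Real.sqrt (T + 1)) ∧
    Tendsto (fun T : ℕ => (1 / ((T : ℝ) + 1)) * ∑ t ∈ Finset.range (T + 1), Eg t)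
      atTop (nhds 0) := by
  have hsqpos : ∀ t : ℕ, (0 : ℝ) < Real.sqrt (t + 1) := fun t =>
    Real.sqrt_pos.mpr (by positivity)
  have hsq : ∀ t : ℕ, (1 / Real.sqrt (t + 1)) ^ 2 = 1 / ((t : ℝ) + 1) := by
    intro t
    rw [div_pow, one_pow, Real.sq_sqrt (by positivity)]
  -- main bound
  have main : ∀ T : ℕ,
      (1 / ((T : ℝ) + 1)) * ∑ t ∈ Finset.range (T + 1), Eg t ≤
        (EL 0 - Lstar) / Real.sqrt (T + 1) +
          2 * K * (1 + Real.log (Real.sqrt (T + 1))) / Real.sqrt (T + 1) := by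
    intro T
    have htel : ∑ t ∈ Finset.range (T + 1), (EL t - EL (t + 1)) = EL 0 - EL (T + 1) :=
      Finset.sum_range_sub' EL (T + 1)
    have h1 : ∑ t ∈ Finset.range (T + 1), (1 / Real.sqrt (t + 1)) * Eg t ≤
        EL 0 - EL (T + 1) + K * ∑ t ∈ Finset.range (T + 1), (1 / ((t : ℝ) + 1)) := by
      calc ∑ t ∈ Finset.range (T + 1), (1 / Real.sqrt (t + 1)) * Eg t
          ≤ ∑ t ∈ Finset.range (T + 1),
              (EL t - EL (t + 1) + K * (1 / ((t : ℝ) + 1))) := by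
            refine Finset.sum_le_sum fun t _ => ?_
            have := hstep t
            rwa [hsq t] at this
        _ = EL 0 - EL (T + 1) + K * ∑ t ∈ Finset.range (T + 1), (1 / ((t : ℝ) + 1)) := by
            rw [Finset.sum_add_distrib, htel, ← Finset.mul_sum]
    have h2 : (1 / Real.sqrt (T + 1)) * ∑ t ∈ Finset.range (T + 1), Eg t ≤
        ∑ t ∈ Finset.range (T + 1), (1 / Real.sqrt (t + 1)) * Eg t := by
      rw [Finset.mul_sum]
      refine Finset.sum_le_sum fun t ht => ?_
      have htle : (t : ℝ) + 1 ≤ (T : ℝ) + 1 := by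
        have h := Nat.lt_succ_iff.mp (Finset.mem_range.mp ht)
        exact add_le_add_left (Nat.cast_le.mpr h) 1
      exact mul_le_mul_of_nonneg_right
        (one_div_le_one_div_of_le (hsqpos t) (Real.sqrt_le_sqrt htle)) (hEg t)
    have h3 : ∑ t ∈ Finset.range (T + 1), (1 : ℝ) / ((t : ℝ) + 1) ≤
        1 + Real.log ((T : ℝ) + 1) := sum_inv_le_one_add_log T
    have hlog : Real.log ((T : ℝ) + 1) = 2 * Real.log (Real.sqrt (T + 1)) := by
      rw [Real.log_sqrt (by positivity)]; ring
    have h4 : (1 / Real.sqrt (T + 1)) * ∑ t ∈ Finset.range (T + 1), Eg t ≤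
        (EL 0 - Lstar) + 2 * K * (1 + Real.log (Real.sqrt (T + 1))) := by
      have hb : EL 0 - EL (T + 1) + K * ∑ t ∈ Finset.range (T + 1), (1 / ((t : ℝ) + 1)) ≤
          (EL 0 - Lstar) + 2 * K * (1 + Real.log (Real.sqrt (T + 1))) := by
        have hK2 : K * ∑ t ∈ Finset.range (T + 1), (1 / ((t : ℝ) + 1)) ≤
            K * (1 + Real.log ((T : ℝ) + 1)) := mul_le_mul_of_nonneg_left h3 hK
        have hlog' : 0 ≤ Real.log (Real.sqrt (T + 1)) := by
          apply Real.log_nonneg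
          rw [Real.one_le_sqrt]
          linarith [Nat.cast_nonneg (α := ℝ) T]
        have : K * (1 + Real.log ((T : ℝ) + 1)) ≤
            2 * K * (1 + Real.log (Real.sqrt (T + 1))) := by
          rw [hlog]; nlinarith
        linarith [hLstar (T + 1)]
      linarith
    -- divide by sqrt(T+1)
    have hpos := hsqpos T
    have key : (1 / ((T : ℝ) + 1)) * ∑ t ∈ Finset.range (T + 1), Eg t =
        (1 / Real.sqrt (T + 1)) * ((1 / Real.sqrt (T + 1)) *
          ∑ t ∈ Finset.range (T + 1), Eg t) := by
      rw [← mul_assoc, ← pow_two, hsq T]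
    rw [key, ← add_div]
    calc (1 / Real.sqrt (T + 1)) * ((1 / Real.sqrt (T + 1)) *
          ∑ t ∈ Finset.range (T + 1), Eg t)
        ≤ (1 / Real.sqrt (T + 1)) * ((EL 0 - Lstar) + 2 * K * (1 + Real.log (Real.sqrt (T + 1)))) :=
          mul_le_mul_of_nonneg_left h4 (by positivity)
      _ = (EL 0 - Lstar + 2 * K * (1 + Real.log (Real.sqrt (T + 1)))) / Real.sqrt (T + 1) := by
          rw [one_div, inv_mul_eq_div]
  refine ⟨main, ?_⟩
  -- the RHS tends to 0
  have hy : Tendsto (fun T : ℕ => Real.sqrt (T + 1)) atTop atTop := by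
    have h1 : Tendsto (fun T : ℕ => ((T : ℝ) + 1)) atTop atTop :=
      tendsto_atTop_add_const_right _ _ tendsto_natCast_atTop_atTop
    refine ((tendsto_rpow_atTop (by norm_num : (0:ℝ) < 1/2)).comp h1).congr fun T => ?_
    exact (Real.sqrt_eq_rpow _).symm
  have hlogdiv : Tendsto (fun x : ℝ => Real.log x / x) atTop (nhds 0) :=
    Real.isLittleO_log_id_atTop.tendsto_div_nhds_zero
  have hinv : Tendsto (fun T : ℕ => 1 / Real.sqrt (T + 1)) atTop (nhds 0) := by
    simpa [one_div, Pi.inv_def] using hy.inv_tendsto_atTop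
  have hRHS : Tendsto (fun T : ℕ =>
      (EL 0 - Lstar) / Real.sqrt (T + 1) +
        2 * K * (1 + Real.log (Real.sqrt (T + 1))) / Real.sqrt (T + 1))
      atTop (nhds 0) := by
    have h1 : Tendsto (fun T : ℕ => (EL 0 - Lstar) / Real.sqrt (T + 1)) atTop (nhds 0) := by
      have := hinv.const_mul (EL 0 - Lstar)
      simpa [one_div, div_eq_mul_inv, mul_zero] using this
    have h2 : Tendsto (fun T : ℕ =>
        2 * K * (1 + Real.log (Real.sqrt (T + 1))) / Real.sqrt (T + 1)) atTop (nhds 0) := by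
      have hl : Tendsto (fun T : ℕ => Real.log (Real.sqrt (T + 1)) / Real.sqrt (T + 1))
          atTop (nhds 0) := hlogdiv.comp hy
      have : Tendsto (fun T : ℕ =>
          2 * K * (1 / Real.sqrt (T + 1) + Real.log (Real.sqrt (T + 1)) / Real.sqrt (T + 1)))
          atTop (nhds 0) := by
        have := (hinv.add hl).const_mul (2 * K)
        simpa using this
      refine this.congr fun T => ?_
      field_simp
    simpa using h1.add h2
  refine squeeze_zero (fun T => ?_) main hRHS
  have : (0:ℝ) ≤ ∑ t ∈ Finset.range (T + 1), Eg t :=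
    Finset.sum_nonneg fun t _ => hEg t
  positivity
end
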